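/- arXiv:2205.10825 — 2 statements merged into one kernel-verified Lean document; each statement's English description precedes it below -/
import Mathlib

section
/- Let K be the symmetric 5×5 stencil parameterized by w_0,...,w_5, and let u be a smooth function of two variables. If Σ K = 0 (i.e., w_0 + 4w_1 + 4w_2 + 4w_3 + 8w_4 + 4w_5 = 0) and w_1 + 2w_2 + 4w_3 + 10w_4 + 8w_5 = 1, then (1/h²)Σ_{p,q=-2}^{2} K_{pq} u(x+ph, y+qh) = Δu(x,y) + O(h²) as h → 0. -/
open Asymptotics

/-- The centrally symmetric 5×5 stencil with six parameters. -/
def stencil (w0 w1 w2 w3 w4 w5 : ℝ) (p q : ℤ) : ℝ :=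
  if p = 0 ∧ q = 0 then w0
  else if (|p| = 1 ∧ q = 0) ∨ (p = 0 ∧ |q| = 1) then w1
  else if |p| = 1 ∧ |q| = 1 then w2
  else if (|p| = 2 ∧ q = 0) ∨ (p = 0 ∧ |q| = 2) then w3
  else if (|p| = 1 ∧ |q| = 2) ∨ (|p| = 2 ∧ |q| = 1) then w4
  else w5

/-! ### Auxiliary machinery -/

noncomputable def pd (e : ℝ × ℝ) (f : ℝ × ℝ → ℝ) : ℝ × ℝ → ℝ := fun z => fderiv ℝ f z e

lemma pd_contDiff (e : ℝ × ℝ) {f : ℝ × ℝ → ℝ} (hf : ContDiff ℝ (⊤ : ℕ∞) f) :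
    ContDiff ℝ (⊤ : ℕ∞) (pd e f) :=
  (hf.fderiv_right (le_of_eq (by simp))).clm_apply contDiff_const

lemma hasDerivAt_line {f : ℝ × ℝ → ℝ} (hf : ContDiff ℝ (⊤ : ℕ∞) f) (c w : ℝ × ℝ) (t : ℝ) :
    HasDerivAt (fun h : ℝ => f (c + h • w)) (fderiv ℝ f (c + t • w) w) t := by
  have hline : HasDerivAt (fun h : ℝ => c + h • w) w t := by
    simpa using ((hasDerivAt_id t).smul_const w).const_add c
  exact ((hf.differentiable (by simp)) (c + t • w)).hasFDerivAt.comp_hasDerivAt t hline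

lemma fderiv_decomp (f : ℝ × ℝ → ℝ) (z : ℝ × ℝ) (w : ℝ × ℝ) :
    fderiv ℝ f z w = w.1 * pd (1, 0) f z + w.2 * pd (0, 1) f z := by
  have hw : w = w.1 • ((1:ℝ), (0:ℝ)) + w.2 • ((0:ℝ), (1:ℝ)) := by ext <;> simp
  rw [pd, pd]
  conv_lhs => rw [hw]
  rw [map_add, map_smul, map_smul]
  simp [smul_eq_mul]

lemma pd_smul_add (e : ℝ × ℝ) (a b : ℝ) {f g : ℝ × ℝ → ℝ}
    (hf : ContDiff ℝ (⊤ : ℕ∞) f) (hg : ContDiff ℝ (⊤ : ℕ∞) g) :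
    pd e (fun z => a * f z + b * g z) = fun z => a * pd e f z + b * pd e g z := by
  funext z
  have hf' := (hf.differentiable (by simp)) z
  have hg' := (hg.differentiable (by simp)) z
  rw [pd, fderiv_fun_add ((hf'.const_mul a)) ((hg'.const_mul b)), fderiv_const_mul hf' a,
    fderiv_const_mul hg' b]
  simp [pd]

lemma deriv_slice1 {f : ℝ × ℝ → ℝ} (hf : ContDiff ℝ (⊤ : ℕ∞) f) (a b : ℝ) :
    deriv (fun s => f (s, b)) a = pd (1, 0) f (a, b) := by
  have := (hasDerivAt_line hf (0, b) (1, 0) a)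
  simp only [Prod.mk_add_mk, Prod.smul_mk, smul_eq_mul, mul_one, mul_zero, zero_add,
    add_zero] at this
  exact this.deriv

lemma deriv_slice2 {f : ℝ × ℝ → ℝ} (hf : ContDiff ℝ (⊤ : ℕ∞) f) (a b : ℝ) :
    deriv (fun t => f (a, t)) b = pd (0, 1) f (a, b) := by
  have := (hasDerivAt_line hf (a, 0) (0, 1) b)
  simp only [Prod.mk_add_mk, Prod.smul_mk, smul_eq_mul, mul_one, mul_zero, zero_add,
    add_zero] at this
  exact this.deriv

noncomputable def Ssum (w0 w1 w2 w3 w4 w5 x y : ℝ) (φ : ℤ → ℤ → ℝ × ℝ → ℝ) : ℝ → ℝ :=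
  fun h => ∑ p ∈ Finset.Icc (-2:ℤ) 2, ∑ q ∈ Finset.Icc (-2:ℤ) 2,
    stencil w0 w1 w2 w3 w4 w5 p q * φ p q (x + p*h, y + q*h)

lemma Ssum_hasDerivAt {w0 w1 w2 w3 w4 w5 x y : ℝ} {φ : ℤ → ℤ → ℝ × ℝ → ℝ}
    (hφ : ∀ p q, ContDiff ℝ (⊤ : ℕ∞) (φ p q)) (t : ℝ) :
    HasDerivAt (Ssum w0 w1 w2 w3 w4 w5 x y φ)
      (Ssum w0 w1 w2 w3 w4 w5 x y
        (fun p q z => (p:ℝ) * pd (1,0) (φ p q) z + (q:ℝ) * pd (0,1) (φ p q) z) t) t := by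
  unfold Ssum
  apply HasDerivAt.fun_sum
  intro p _
  apply HasDerivAt.fun_sum
  intro q _
  have hpt : ∀ h : ℝ, ((x, y) : ℝ × ℝ) + h • (((p:ℝ), (q:ℝ)) : ℝ × ℝ) = (x + p*h, y + q*h) := by
    intro h; ext <;> simp [mul_comm]
  have hl := (hasDerivAt_line (hφ p q) (x, y) ((p:ℝ), (q:ℝ)) t).const_mul
    (stencil w0 w1 w2 w3 w4 w5 p q)
  simp only [hpt] at hl
  rw [fderiv_decomp] at hl
  exact hl

lemma Ssum_deriv {w0 w1 w2 w3 w4 w5 x y : ℝ} {φ : ℤ → ℤ → ℝ × ℝ → ℝ}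
    (hφ : ∀ p q, ContDiff ℝ (⊤ : ℕ∞) (φ p q)) :
    deriv (Ssum w0 w1 w2 w3 w4 w5 x y φ) =
      Ssum w0 w1 w2 w3 w4 w5 x y
        (fun p q z => (p:ℝ) * pd (1,0) (φ p q) z + (q:ℝ) * pd (0,1) (φ p q) z) :=
  funext fun t => (Ssum_hasDerivAt hφ t).deriv

lemma Ssum_differentiable {w0 w1 w2 w3 w4 w5 x y : ℝ} {φ : ℤ → ℤ → ℝ × ℝ → ℝ}
    (hφ : ∀ p q, ContDiff ℝ (⊤ : ℕ∞) (φ p q)) :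
    Differentiable ℝ (Ssum w0 w1 w2 w3 w4 w5 x y φ) :=
  fun t => (Ssum_hasDerivAt hφ t).differentiableAt

lemma Ssum_zero (w0 w1 w2 w3 w4 w5 x y : ℝ) (φ : ℤ → ℤ → ℝ × ℝ → ℝ) :
    Ssum w0 w1 w2 w3 w4 w5 x y φ 0 =
      ∑ p ∈ Finset.Icc (-2:ℤ) 2, ∑ q ∈ Finset.Icc (-2:ℤ) 2,
        stencil w0 w1 w2 w3 w4 w5 p q * φ p q (x, y) := by
  simp [Ssum]

/-! ### Stencil moment computations -/

lemma sumK0 (w0 w1 w2 w3 w4 w5 : ℝ)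
    (hcons : w0 + 4*w1 + 4*w2 + 4*w3 + 8*w4 + 4*w5 = 0) (a : ℝ) :
    ∑ p ∈ Finset.Icc (-2:ℤ) 2, ∑ q ∈ Finset.Icc (-2:ℤ) 2,
      stencil w0 w1 w2 w3 w4 w5 p q * a = 0 := by
  rw [show (Finset.Icc (-2:ℤ) 2) = {-2,-1,0,1,2} from by decide]
  norm_num [Finset.sum_insert, Finset.mem_insert, Finset.mem_singleton, stencil]
  linear_combination a * hcons

lemma sumK1 (w0 w1 w2 w3 w4 w5 : ℝ) (a b : ℝ) :
    ∑ p ∈ Finset.Icc (-2:ℤ) 2, ∑ q ∈ Finset.Icc (-2:ℤ) 2,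
      stencil w0 w1 w2 w3 w4 w5 p q * ((p:ℝ) * a + (q:ℝ) * b) = 0 := by
  rw [show (Finset.Icc (-2:ℤ) 2) = {-2,-1,0,1,2} from by decide]
  norm_num [Finset.sum_insert, Finset.mem_insert, Finset.mem_singleton, stencil]
  ring

lemma sumK2 (w0 w1 w2 w3 w4 w5 : ℝ)
    (hord2 : w1 + 2*w2 + 4*w3 + 10*w4 + 8*w5 = 1) (a b c d : ℝ) :
    ∑ p ∈ Finset.Icc (-2:ℤ) 2, ∑ q ∈ Finset.Icc (-2:ℤ) 2,
      stencil w0 w1 w2 w3 w4 w5 p q *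
        ((p:ℝ) * ((p:ℝ)*a + (q:ℝ)*b) + (q:ℝ) * ((p:ℝ)*c + (q:ℝ)*d)) = 2*a + 2*d := by
  rw [show (Finset.Icc (-2:ℤ) 2) = {-2,-1,0,1,2} from by decide]
  norm_num [Finset.sum_insert, Finset.mem_insert, Finset.mem_singleton, stencil]
  linear_combination (2*a + 2*d) * hord2

lemma sumK3 (w0 w1 w2 w3 w4 w5 : ℝ) (a b c d e f g k : ℝ) :
    ∑ p ∈ Finset.Icc (-2:ℤ) 2, ∑ q ∈ Finset.Icc (-2:ℤ) 2,
      stencil w0 w1 w2 w3 w4 w5 p q *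
        ((p:ℝ) * ((p:ℝ) * ((p:ℝ)*a + (q:ℝ)*b) + (q:ℝ) * ((p:ℝ)*c + (q:ℝ)*d))
          + (q:ℝ) * ((p:ℝ) * ((p:ℝ)*e + (q:ℝ)*f) + (q:ℝ) * ((p:ℝ)*g + (q:ℝ)*k))) = 0 := by
  rw [show (Finset.Icc (-2:ℤ) 2) = {-2,-1,0,1,2} from by decide]
  norm_num [Finset.sum_insert, Finset.mem_insert, Finset.mem_singleton, stencil]
  ring

/-! ### MVT bootstrap -/

lemma isBigO_succ_of_deriv {f : ℝ → ℝ} {n : ℕ} (hf : Differentiable ℝ f) (h0 : f 0 = 0)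
    (hO : deriv f =O[nhds (0:ℝ)] fun t => t ^ n) :
    f =O[nhds (0:ℝ)] fun t => t ^ (n + 1) := by
  obtain ⟨C, hC⟩ := hO.isBigOWith
  rw [isBigOWith_iff, Metric.eventually_nhds_iff] at hC
  obtain ⟨δ, hδ, hball⟩ := hC
  rw [isBigO_iff]
  refine ⟨|C|, Metric.eventually_nhds_iff.2 ⟨δ, hδ, fun {h} hh => ?_⟩⟩
  have key : ∀ t ∈ Set.uIcc (0:ℝ) h, ‖deriv f t‖ ≤ |C| * |h| ^ n := by
    intro t ht
    have hth : |t| ≤ |h| := by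
      rcases Set.mem_uIcc.1 ht with ⟨h1, h2⟩ | ⟨h1, h2⟩
      · exact abs_le.2 ⟨by nlinarith [abs_nonneg h, le_abs_self h], le_trans h2 (le_abs_self h)⟩
      · exact abs_le.2 ⟨le_trans (neg_abs_le h) h1, by nlinarith [abs_nonneg h, neg_abs_le h]⟩
    have htd : dist t 0 < δ := by
      rw [Real.dist_eq, sub_zero]
      calc |t| ≤ |h| := hth
        _ < δ := by rw [Real.dist_eq, sub_zero] at hh; exact hh
    calc ‖deriv f t‖ ≤ C * ‖t ^ n‖ := hball htd
      _ ≤ |C| * |h| ^ n := by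
          rw [Real.norm_eq_abs, abs_pow]
          have := pow_le_pow_left₀ (abs_nonneg t) hth n
          nlinarith [le_abs_self C, abs_nonneg C, pow_nonneg (abs_nonneg t) n,
            pow_nonneg (abs_nonneg h) n]
  have := Convex.norm_image_sub_le_of_norm_deriv_le (fun t _ => hf t) key
    (convex_uIcc 0 h) Set.left_mem_uIcc Set.right_mem_uIcc
  rw [h0, sub_zero, sub_zero] at this
  calc ‖f h‖ ≤ |C| * |h| ^ n * ‖h‖ := this
    _ = |C| * ‖h ^ (n+1)‖ := by rw [Real.norm_eq_abs, Real.norm_eq_abs, abs_pow]; ring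

/-! ### Asymptotic chain -/

lemma chain_O {F0 F1 F2 F3 : ℝ → ℝ} {c : ℝ}
    (hd0 : Differentiable ℝ F0) (hd1 : Differentiable ℝ F1) (hd2 : Differentiable ℝ F2)
    (hd3 : Differentiable ℝ F3)
    (e0 : F0 0 = 0) (e1 : F1 0 = 0) (e2 : F2 0 = 2 * c) (e3 : F3 0 = 0)
    (g1 : deriv F0 = F1) (g2 : deriv F1 = F2) (g3 : deriv F2 = F3) :
    (fun h : ℝ => F0 h - c * h ^ 2) =O[nhds (0:ℝ)] fun h => h ^ 4 := by
  have O1 : F3 =O[nhds (0:ℝ)] fun t => t ^ 1 := by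
    have h1 := (hd3 0).isBigO_sub
    simpa [e3] using h1
  have O2 : (fun h : ℝ => F2 h - 2 * c) =O[nhds (0:ℝ)] fun t => t ^ 2 := by
    refine isBigO_succ_of_deriv (hd2.sub_const (2*c)) (by simp [e2]) ?_
    have hder : deriv (fun h : ℝ => F2 h - 2 * c) = F3 := by
      funext t; rw [deriv_sub_const, g3]
    rw [hder]; exact O1
  have O3 : (fun h : ℝ => F1 h - 2 * c * h) =O[nhds (0:ℝ)] fun t => t ^ 3 := by
    refine isBigO_succ_of_deriv (hd1.sub (differentiable_id.const_mul (2*c)))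
      (by simp [e1]) ?_
    have hder : deriv (fun h : ℝ => F1 h - 2 * c * h) = fun h => F2 h - 2 * c := by
      funext t
      have h1 : HasDerivAt (fun h : ℝ => F1 h - 2 * c * h) (deriv F1 t - 2 * c) t := by
        have h2 := ((hd1 t).hasDerivAt).sub (((hasDerivAt_id t).const_mul (2*c)))
        exact (by simpa using h2 : HasDerivAt (F1 - fun y => 2 * c * y) (deriv F1 t - 2 * c) t)
      rw [h1.deriv, g2]
    rw [hder]; exact O2
  refine isBigO_succ_of_deriv (hd0.sub ((differentiable_pow 2).const_mul c))
    (by simp [e0]) ?_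
  have hder : deriv (fun h : ℝ => F0 h - c * h ^ 2) = fun h => F1 h - 2 * c * h := by
    funext t
    have h1 : HasDerivAt (fun h : ℝ => F0 h - c * h ^ 2) (deriv F0 t - 2 * c * t) t := by
      have h2 := ((hd0 t).hasDerivAt).fun_sub ((hasDerivAt_pow 2 t).const_mul c)
      have h3 : deriv F0 t - 2 * c * t = deriv F0 t - c * ((2 : ℕ) * t ^ (2 - 1)) := by
        push_cast
        ring
      rw [h3]; exact h2
    rw [h1.deriv, g1]
  rw [hder]; exact O3


/-! ### Main auxiliary lemma -/

lemma main_aux (w0 w1 w2 w3 w4 w5 : ℝ)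
    (hcons : w0 + 4*w1 + 4*w2 + 4*w3 + 8*w4 + 4*w5 = 0)
    (hord2 : w1 + 2*w2 + 4*w3 + 10*w4 + 8*w5 = 1)
    (x y : ℝ) (v : ℝ × ℝ → ℝ) (hv : ContDiff ℝ (⊤ : ℕ∞) v) :
    (fun h : ℝ => Ssum w0 w1 w2 w3 w4 w5 x y (fun _ _ => v) h
        - (pd (1,0) (pd (1,0) v) (x,y) + pd (0,1) (pd (0,1) v) (x,y)) * h^2)
      =O[nhds (0:ℝ)] fun h => h ^ 4 := by
  set c : ℝ := pd (1,0) (pd (1,0) v) (x,y) + pd (0,1) (pd (0,1) v) (x,y) with hc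
  -- smoothness of iterated partials
  have hA1 : ContDiff ℝ (⊤ : ℕ∞) (pd (1,0) v) := pd_contDiff _ hv
  have hA2 : ContDiff ℝ (⊤ : ℕ∞) (pd (0,1) v) := pd_contDiff _ hv
  have hA11 : ContDiff ℝ (⊤ : ℕ∞) (pd (1,0) (pd (1,0) v)) := pd_contDiff _ hA1
  have hA12 : ContDiff ℝ (⊤ : ℕ∞) (pd (1,0) (pd (0,1) v)) := pd_contDiff _ hA2
  have hA21 : ContDiff ℝ (⊤ : ℕ∞) (pd (0,1) (pd (1,0) v)) := pd_contDiff _ hA1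
  have hA22 : ContDiff ℝ (⊤ : ℕ∞) (pd (0,1) (pd (0,1) v)) := pd_contDiff _ hA2
  -- the explicit derivative layers
  have hφ0 : ∀ p q : ℤ, ContDiff ℝ (⊤ : ℕ∞) ((fun _ _ : ℤ => v) p q) := fun _ _ => hv
  have hφ1 : ∀ p q : ℤ, ContDiff ℝ (⊤ : ℕ∞)
      (fun z => (p:ℝ) * pd (1,0) v z + (q:ℝ) * pd (0,1) v z) := fun p q =>
    (contDiff_const.mul hA1).add (contDiff_const.mul hA2)
  have hφ2 : ∀ p q : ℤ, ContDiff ℝ (⊤ : ℕ∞)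
      (fun z => (p:ℝ) * ((p:ℝ) * pd (1,0) (pd (1,0) v) z + (q:ℝ) * pd (1,0) (pd (0,1) v) z)
        + (q:ℝ) * ((p:ℝ) * pd (0,1) (pd (1,0) v) z + (q:ℝ) * pd (0,1) (pd (0,1) v) z)) :=
    fun p q =>
      (contDiff_const.mul ((contDiff_const.mul hA11).add (contDiff_const.mul hA12))).add
        (contDiff_const.mul ((contDiff_const.mul hA21).add (contDiff_const.mul hA22)))
  -- derivative identities
  have d1 : deriv (Ssum w0 w1 w2 w3 w4 w5 x y (fun _ _ => v)) =
      Ssum w0 w1 w2 w3 w4 w5 x y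
        (fun p q z => (p:ℝ) * pd (1,0) v z + (q:ℝ) * pd (0,1) v z) :=
    Ssum_deriv hφ0
  have d2 : deriv (Ssum w0 w1 w2 w3 w4 w5 x y
        (fun p q z => (p:ℝ) * pd (1,0) v z + (q:ℝ) * pd (0,1) v z)) =
      Ssum w0 w1 w2 w3 w4 w5 x y
        (fun p q z =>
          (p:ℝ) * ((p:ℝ) * pd (1,0) (pd (1,0) v) z + (q:ℝ) * pd (1,0) (pd (0,1) v) z)
          + (q:ℝ) * ((p:ℝ) * pd (0,1) (pd (1,0) v) z + (q:ℝ) * pd (0,1) (pd (0,1) v) z)) := by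
    rw [Ssum_deriv hφ1]
    refine congrArg _ ?_
    funext p q
    rw [pd_smul_add (1,0) (p:ℝ) (q:ℝ) hA1 hA2, pd_smul_add (0,1) (p:ℝ) (q:ℝ) hA1 hA2]
  have d3 : deriv (Ssum w0 w1 w2 w3 w4 w5 x y
        (fun p q z =>
          (p:ℝ) * ((p:ℝ) * pd (1,0) (pd (1,0) v) z + (q:ℝ) * pd (1,0) (pd (0,1) v) z)
          + (q:ℝ) * ((p:ℝ) * pd (0,1) (pd (1,0) v) z + (q:ℝ) * pd (0,1) (pd (0,1) v) z))) =
      Ssum w0 w1 w2 w3 w4 w5 x y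
        (fun p q z =>
          (p:ℝ) * ((p:ℝ) * ((p:ℝ) * pd (1,0) (pd (1,0) (pd (1,0) v)) z
                    + (q:ℝ) * pd (1,0) (pd (1,0) (pd (0,1) v)) z)
            + (q:ℝ) * ((p:ℝ) * pd (1,0) (pd (0,1) (pd (1,0) v)) z
                    + (q:ℝ) * pd (1,0) (pd (0,1) (pd (0,1) v)) z))
          + (q:ℝ) * ((p:ℝ) * ((p:ℝ) * pd (0,1) (pd (1,0) (pd (1,0) v)) z
                    + (q:ℝ) * pd (0,1) (pd (1,0) (pd (0,1) v)) z)
            + (q:ℝ) * ((p:ℝ) * pd (0,1) (pd (0,1) (pd (1,0) v)) z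
                    + (q:ℝ) * pd (0,1) (pd (0,1) (pd (0,1) v)) z))) := by
    rw [Ssum_deriv hφ2]
    refine congrArg _ ?_
    funext p q
    rw [pd_smul_add (1,0) (p:ℝ) (q:ℝ)
        ((contDiff_const.mul hA11).add (contDiff_const.mul hA12))
        ((contDiff_const.mul hA21).add (contDiff_const.mul hA22)),
      pd_smul_add (0,1) (p:ℝ) (q:ℝ)
        ((contDiff_const.mul hA11).add (contDiff_const.mul hA12))
        ((contDiff_const.mul hA21).add (contDiff_const.mul hA22)),
      pd_smul_add (1,0) (p:ℝ) (q:ℝ) hA11 hA12,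
      pd_smul_add (1,0) (p:ℝ) (q:ℝ) hA21 hA22,
      pd_smul_add (0,1) (p:ℝ) (q:ℝ) hA11 hA12,
      pd_smul_add (0,1) (p:ℝ) (q:ℝ) hA21 hA22]
  have hφ3 : ∀ p q : ℤ, ContDiff ℝ (⊤ : ℕ∞)
      (fun z =>
          (p:ℝ) * ((p:ℝ) * ((p:ℝ) * pd (1,0) (pd (1,0) (pd (1,0) v)) z
                    + (q:ℝ) * pd (1,0) (pd (1,0) (pd (0,1) v)) z)
            + (q:ℝ) * ((p:ℝ) * pd (1,0) (pd (0,1) (pd (1,0) v)) z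
                    + (q:ℝ) * pd (1,0) (pd (0,1) (pd (0,1) v)) z))
          + (q:ℝ) * ((p:ℝ) * ((p:ℝ) * pd (0,1) (pd (1,0) (pd (1,0) v)) z
                    + (q:ℝ) * pd (0,1) (pd (1,0) (pd (0,1) v)) z)
            + (q:ℝ) * ((p:ℝ) * pd (0,1) (pd (0,1) (pd (1,0) v)) z
                    + (q:ℝ) * pd (0,1) (pd (0,1) (pd (0,1) v)) z))) := fun p q =>
    (contDiff_const.mul
      ((contDiff_const.mul ((contDiff_const.mul (pd_contDiff _ hA11)).add
          (contDiff_const.mul (pd_contDiff _ hA12)))).add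
        (contDiff_const.mul ((contDiff_const.mul (pd_contDiff _ hA21)).add
          (contDiff_const.mul (pd_contDiff _ hA22)))))).add
    (contDiff_const.mul
      ((contDiff_const.mul ((contDiff_const.mul (pd_contDiff _ hA11)).add
          (contDiff_const.mul (pd_contDiff _ hA12)))).add
        (contDiff_const.mul ((contDiff_const.mul (pd_contDiff _ hA21)).add
          (contDiff_const.mul (pd_contDiff _ hA22))))))
  -- evaluations at 0
  have E0 : Ssum w0 w1 w2 w3 w4 w5 x y (fun _ _ => v) 0 = 0 := by
    rw [Ssum_zero]; exact sumK0 w0 w1 w2 w3 w4 w5 hcons (v (x, y))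
  have E1 : Ssum w0 w1 w2 w3 w4 w5 x y
      (fun p q z => (p:ℝ) * pd (1,0) v z + (q:ℝ) * pd (0,1) v z) 0 = 0 := by
    rw [Ssum_zero]; exact sumK1 w0 w1 w2 w3 w4 w5 (pd (1,0) v (x,y)) (pd (0,1) v (x,y))
  have E2 : Ssum w0 w1 w2 w3 w4 w5 x y
      (fun p q z =>
        (p:ℝ) * ((p:ℝ) * pd (1,0) (pd (1,0) v) z + (q:ℝ) * pd (1,0) (pd (0,1) v) z)
        + (q:ℝ) * ((p:ℝ) * pd (0,1) (pd (1,0) v) z + (q:ℝ) * pd (0,1) (pd (0,1) v) z)) 0 =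
      2 * pd (1,0) (pd (1,0) v) (x,y) + 2 * pd (0,1) (pd (0,1) v) (x,y) := by
    rw [Ssum_zero]
    exact sumK2 w0 w1 w2 w3 w4 w5 hord2 (pd (1,0) (pd (1,0) v) (x,y))
      (pd (1,0) (pd (0,1) v) (x,y)) (pd (0,1) (pd (1,0) v) (x,y)) (pd (0,1) (pd (0,1) v) (x,y))
  have E3 : Ssum w0 w1 w2 w3 w4 w5 x y
      (fun p q z =>
          (p:ℝ) * ((p:ℝ) * ((p:ℝ) * pd (1,0) (pd (1,0) (pd (1,0) v)) z
                    + (q:ℝ) * pd (1,0) (pd (1,0) (pd (0,1) v)) z)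
            + (q:ℝ) * ((p:ℝ) * pd (1,0) (pd (0,1) (pd (1,0) v)) z
                    + (q:ℝ) * pd (1,0) (pd (0,1) (pd (0,1) v)) z))
          + (q:ℝ) * ((p:ℝ) * ((p:ℝ) * pd (0,1) (pd (1,0) (pd (1,0) v)) z
                    + (q:ℝ) * pd (0,1) (pd (1,0) (pd (0,1) v)) z)
            + (q:ℝ) * ((p:ℝ) * pd (0,1) (pd (0,1) (pd (1,0) v)) z
                    + (q:ℝ) * pd (0,1) (pd (0,1) (pd (0,1) v)) z))) 0 = 0 := by
    rw [Ssum_zero]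
    exact sumK3 w0 w1 w2 w3 w4 w5 _ _ _ _ _ _ _ _
  refine chain_O ?_ ?_ ?_ ?_ E0 E1 ?_ E3 d1 d2 d3
  · exact Ssum_differentiable hφ0
  · exact Ssum_differentiable hφ1
  · exact Ssum_differentiable hφ2
  · exact Ssum_differentiable hφ3
  · rw [E2, hc]; ring

theorem stmt_5 (w0 w1 w2 w3 w4 w5 : ℝ)
    (hcons : w0 + 4*w1 + 4*w2 + 4*w3 + 8*w4 + 4*w5 = 0)
    (hord2 : w1 + 2*w2 + 4*w3 + 10*w4 + 8*w5 = 1)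
    (u : ℝ → ℝ → ℝ) (hu : ContDiff ℝ (⊤ : ℕ∞) (fun p : ℝ × ℝ => u p.1 p.2))
    (x y : ℝ) :
    (fun h : ℝ =>
        (1 / h^2) * ∑ p ∈ Finset.Icc (-2 : ℤ) 2, ∑ q ∈ Finset.Icc (-2 : ℤ) 2,
            stencil w0 w1 w2 w3 w4 w5 p q * u (x + p * h) (y + q * h)
          - (deriv (deriv (fun s => u s y)) x + deriv (deriv (fun s => u x s)) y))
      =O[nhdsWithin 0 {0}ᶜ] (fun h : ℝ => h^2) := by
  have hv : ContDiff ℝ (⊤ : ℕ∞) (fun z : ℝ × ℝ => u z.1 z.2) := hu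
  set v : ℝ × ℝ → ℝ := fun z => u z.1 z.2 with hvdef
  -- identify the Laplacian constant
  have hcx : deriv (deriv (fun s => u s y)) x = pd (1,0) (pd (1,0) v) (x, y) := by
    have h1 : deriv (fun s => u s y) = fun s => pd (1,0) v (s, y) := by
      funext a
      exact deriv_slice1 hv a y
    rw [h1]
    exact deriv_slice1 (pd_contDiff _ hv) x y
  have hcy : deriv (deriv (fun s => u x s)) y = pd (0,1) (pd (0,1) v) (x, y) := by
    have h1 : deriv (fun s => u x s) = fun s => pd (0,1) v (x, s) := by
      funext a
      exact deriv_slice2 hv x a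
    rw [h1]
    exact deriv_slice2 (pd_contDiff _ hv) x y
  rw [hcx, hcy]
  set c : ℝ := pd (1,0) (pd (1,0) v) (x, y) + pd (0,1) (pd (0,1) v) (x, y) with hc
  have hsum : ∀ h : ℝ, (∑ p ∈ Finset.Icc (-2 : ℤ) 2, ∑ q ∈ Finset.Icc (-2 : ℤ) 2,
      stencil w0 w1 w2 w3 w4 w5 p q * u (x + p * h) (y + q * h)) =
      Ssum w0 w1 w2 w3 w4 w5 x y (fun _ _ => v) h := fun h => rfl
  have O4 := main_aux w0 w1 w2 w3 w4 w5 hcons hord2 x y v hv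
  rw [← hc] at O4
  have O5 : (fun h : ℝ => Ssum w0 w1 w2 w3 w4 w5 x y (fun _ _ => v) h - c * h ^ 2)
      =O[nhdsWithin (0:ℝ) {0}ᶜ] fun h => h ^ 4 := O4.mono nhdsWithin_le_nhds
  have O6 : (fun h : ℝ => 1 / h ^ 2) =O[nhdsWithin (0:ℝ) {0}ᶜ] fun h : ℝ => 1 / h ^ 2 :=
    isBigO_refl _ _
  have O7 := O6.mul O5
  have heq1 : (fun h : ℝ => 1 / h ^ 2 * (Ssum w0 w1 w2 w3 w4 w5 x y (fun _ _ => v) h - c * h ^ 2))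
      =ᶠ[nhdsWithin (0:ℝ) {0}ᶜ]
      fun h : ℝ => 1 / h ^ 2 * Ssum w0 w1 w2 w3 w4 w5 x y (fun _ _ => v) h - c := by
    filter_upwards [self_mem_nhdsWithin] with h hh
    have hh0 : h ≠ 0 := hh
    field_simp
  have heq2 : (fun h : ℝ => 1 / h ^ 2 * h ^ 4) =ᶠ[nhdsWithin (0:ℝ) {0}ᶜ]
      fun h : ℝ => h ^ 2 := by
    filter_upwards [self_mem_nhdsWithin] with h hh
    have hh0 : h ≠ 0 := hh
    field_simp
  have O8 := (O7.congr' heq1 heq2)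
  exact O8
end

section
/- Let K be the symmetric 5×5 stencil parameterized by w_0,...,w_5 satisfying: w_0 + 4w_1 + 4w_2 + 4w_3 + 8w_4 + 4w_5 = 0, w_1 + 2w_2 + 4w_3 + 10w_4 + 8w_5 = 1, w_2 + 8w_4 + 16w_5 = 0, and (1/12)w_1 + (1/6)w_2 + (4/3)w_3 + (17/6)w_4 + (8/3)w_5 = 0. Then for any C⁶ function u, (1/h²)Σ_{p,q=-2}^{2} K_{pq} u(x+ph, y+qh) = Δu(x,y) + O(h⁴) as h → 0. -/
open Asymptotics

/-!
Restricted to the line `h ↦ (x, y) + h • (p, q)`, Taylor's theorem gives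
`u (x + p h, y + q h) = ∑_{k < 6} h^k / k! · D^k u (x, y) (p, q)^k + O(h⁶)`. Expanding the
multilinear map `D^k u (x, y)` in the basis `(1, 0), (0, 1)` turns the weighted sum over the stencil
of the `k`-th term into a combination of the moments `∑ K p^i q^j` with `i + j = k`, and the moment
conditions kill all of them except the second-order ones, which produce `h² Δu (x, y)`.
-/

open Finset Filter Topology
open scoped Nat

section Line

variable {E G : Type*} [NormedAddCommGroup E] [NormedSpace ℝ E]
  [NormedAddCommGroup G] [NormedSpace ℝ G]

theorem iteratedDeriv_comp_add_smul {f : E → G} {n : WithTop ℕ∞} (hf : ContDiff ℝ n f)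
    (a v : E) (t : ℝ) {k : ℕ} (hk : k ≤ n) :
    iteratedDeriv k (fun s : ℝ => f (a + s • v)) t =
      iteratedFDeriv ℝ k f (a + t • v) (fun _ => v) := by
  have hcomp := (ContinuousLinearMap.id ℝ ℝ).smulRight v |>.iteratedFDeriv_comp_right
    (hf.comp (contDiff_const.add contDiff_id) : ContDiff ℝ n fun w => f (a + w)) t hk
  rw [iteratedDeriv_eq_iteratedFDeriv]
  simpa [Function.comp_def, iteratedFDeriv_comp_add_left] using congrArg (· fun _ => 1) hcomp

theorem deriv_deriv_comp_add_smul {f : E → G} (hf : ContDiff ℝ 2 f) (a v : E) (t : ℝ) :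
    deriv (deriv fun s : ℝ => f (a + s • v)) t =
      iteratedFDeriv ℝ 2 f (a + t • v) (fun _ => v) := by
  rw [← iteratedDeriv_comp_add_smul hf a v t le_rfl, iteratedDeriv_succ, iteratedDeriv_one]

theorem ContDiff.isBigO_sub_taylor_comp_add_smul {f : E → G} {n : ℕ} (hf : ContDiff ℝ n f)
    (a v : E) :
    (fun h : ℝ => f (a + h • v) -
        ∑ k ∈ range n, (h ^ k / k !) • iteratedFDeriv ℝ k f a (fun _ => v))
      =O[𝓝 0] (fun h => h ^ n) := by
  have hline : ContDiff ℝ n fun s : ℝ => f (a + s • v) :=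
    hf.comp (contDiff_const.add (contDiff_id.smul contDiff_const))
  have htaylor := (taylor_isLittleO_univ (x₀ := 0) hline).isBigO
  simp only [sub_zero] at htaylor
  have hlast : (fun h : ℝ => (h ^ n / n !) • iteratedFDeriv ℝ n f a (fun _ => v))
      =O[𝓝 0] (fun h => h ^ n) := by
    have := ((isBigO_refl (fun h : ℝ => h ^ n) (𝓝 0)).const_mul_left (n ! : ℝ)⁻¹).smul
      (isBigO_const_const (iteratedFDeriv ℝ n f a (fun _ => v)) (one_ne_zero (α := ℝ)) (𝓝 0))
    simpa [div_eq_inv_mul] using this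
  have htaylor_eq : ∀ h : ℝ, taylorWithinEval (fun s : ℝ => f (a + s • v)) n Set.univ 0 h =
      ∑ k ∈ range (n + 1), (h ^ k / k !) • iteratedFDeriv ℝ k f a (fun _ => v) := by
    intro h
    rw [taylor_within_apply]
    refine sum_congr rfl fun k hk => ?_
    rw [iteratedDerivWithin_univ, iteratedDeriv_comp_add_smul hf a v 0
      (by exact_mod_cast Nat.lt_succ_iff.mp (mem_range.mp hk))]
    simp [div_eq_inv_mul]
  refine (htaylor.add hlast).congr_left fun h => ?_
  rw [htaylor_eq, sum_range_succ]
  abel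

end Line

theorem MultilinearMap.map_smul_add_smul_univ {R ι M N : Type*} [CommSemiring R] [Fintype ι]
    [DecidableEq ι] [AddCommMonoid M] [Module R M] [AddCommMonoid N] [Module R N]
    (m : MultilinearMap R (fun _ : ι => M) N) (p q : R) (e₁ e₂ : M) :
    m (fun _ => p • e₁ + q • e₂) =
      ∑ s : Finset ι, (p ^ #s * q ^ #sᶜ) • m (s.piecewise (fun _ => e₁) (fun _ => e₂)) := by
  rw [show (fun _ : ι => p • e₁ + q • e₂) = (fun _ => p • e₁) + (fun _ => q • e₂) from rfl,
    m.map_add_univ]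
  refine sum_congr rfl fun s _ => ?_
  have hsplit : s.piecewise (fun _ => p • e₁) (fun _ => q • e₂) = fun i =>
      s.piecewise (fun _ => p) (fun _ => q) i • s.piecewise (fun _ => e₁) (fun _ => e₂) i := by
    ext i
    by_cases hi : i ∈ s <;> simp [hi]
  rw [hsplit, m.map_smul_univ, prod_piecewise, univ_inter, ← compl_eq_univ_sdiff, prod_const,
    prod_const]

/-- Rescaled, these are `∑ K = 0`, `∑ K p² = 2`, `∑ K p²q² = 0` and `∑ K p⁴ = 0`; the odd moments
vanish by the symmetry of the stencil. -/
def StencilMomentConditions (w0 w1 w2 w3 w4 w5 : ℝ) : Prop :=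
  w0 + 4*w1 + 4*w2 + 4*w3 + 8*w4 + 4*w5 = 0 ∧
  w1 + 2*w2 + 4*w3 + 10*w4 + 8*w5 = 1 ∧
  w2 + 8*w4 + 16*w5 = 0 ∧
  (1/12)*w1 + (1/6)*w2 + (4/3)*w3 + (17/6)*w4 + (8/3)*w5 = 0

section Stencil

variable {w0 w1 w2 w3 w4 w5 : ℝ}

theorem stencil_moment (hw : StencilMomentConditions w0 w1 w2 w3 w4 w5) {k l : ℕ}
    (hkl : k + l ≤ 5) :
    ∑ p ∈ Icc (-2 : ℤ) 2, ∑ q ∈ Icc (-2 : ℤ) 2,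
      stencil w0 w1 w2 w3 w4 w5 p q * ((p : ℝ) ^ k * (q : ℝ) ^ l)
      = if (k = 2 ∧ l = 0) ∨ (k = 0 ∧ l = 2) then 2 else 0 := by
  obtain ⟨hcons, hord2, hord4a, hord4b⟩ := hw
  rw [show Icc (-2 : ℤ) 2 = {-2, -1, 0, 1, 2} by decide]
  have hk : k ≤ 5 := by omega
  have hl : l ≤ 5 - k := by omega
  interval_cases k <;> interval_cases l <;> norm_num [stencil] <;> linarith

theorem stencil_sum_multilinear (hw : StencilMomentConditions w0 w1 w2 w3 w4 w5) {n : ℕ}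
    (hn : n ≤ 5) (m : MultilinearMap ℝ (fun _ : Fin n => ℝ × ℝ) ℝ) :
    ∑ p ∈ Icc (-2 : ℤ) 2, ∑ q ∈ Icc (-2 : ℤ) 2,
      stencil w0 w1 w2 w3 w4 w5 p q * m (fun _ => ((p : ℝ), (q : ℝ)))
      = if n = 2 then 2 * (m (fun _ => (1, 0)) + m (fun _ => (0, 1))) else 0 := by
  set e : Finset (Fin n) → Fin n → ℝ × ℝ :=
    fun s => s.piecewise (fun _ => (1, 0)) (fun _ => (0, 1))
  have hexpand (p q : ℝ) : m (fun _ => (p, q)) = ∑ s, (p ^ #s * q ^ #sᶜ) * m (e s) := by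
    simpa using m.map_smul_add_smul_univ p q ((1 : ℝ), (0 : ℝ)) (0, 1)
  calc _ = ∑ s, (∑ p ∈ Icc (-2 : ℤ) 2, ∑ q ∈ Icc (-2 : ℤ) 2,
          stencil w0 w1 w2 w3 w4 w5 p q * ((p : ℝ) ^ #s * (q : ℝ) ^ #sᶜ)) * m (e s) := by
        simp only [hexpand, mul_sum, sum_mul, mul_assoc]
        symm
        rw [sum_comm]
        exact sum_congr rfl fun p _ => sum_comm
    _ = ∑ s, (if (#s = 2 ∧ #sᶜ = 0) ∨ (#s = 0 ∧ #sᶜ = 2) then 2 else 0) * m (e s) := by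
        refine sum_congr rfl fun s _ => ?_
        rw [stencil_moment hw (by rw [card_add_card_compl, Fintype.card_fin]; exact hn)]
    _ = _ := by
        split_ifs with h2
        · subst h2
          rw [show (univ : Finset (Finset (Fin 2))) = {univ, ∅, {0}, {1}} by decide,
            sum_insert (by decide), sum_insert (by decide), sum_insert (by decide), sum_singleton]
          simp [e]
          ring
        · refine sum_eq_zero fun s _ => ?_
          have := card_add_card_compl s
          rw [Fintype.card_fin] at this
          rw [if_neg (by omega), zero_mul]

theorem stencil_sum_taylor (hw : StencilMomentConditions w0 w1 w2 w3 w4 w5)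
    (m : (k : ℕ) → MultilinearMap ℝ (fun _ : Fin k => ℝ × ℝ) ℝ) (h : ℝ) :
    ∑ p ∈ Icc (-2 : ℤ) 2, ∑ q ∈ Icc (-2 : ℤ) 2, stencil w0 w1 w2 w3 w4 w5 p q *
        ∑ k ∈ range 6, (h ^ k / k !) * m k (fun _ => ((p : ℝ), (q : ℝ)))
      = h ^ 2 * (m 2 (fun _ => (1, 0)) + m 2 (fun _ => (0, 1))) := by
  calc _ = ∑ k ∈ range 6, (h ^ k / k !) * ∑ p ∈ Icc (-2 : ℤ) 2, ∑ q ∈ Icc (-2 : ℤ) 2,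
          stencil w0 w1 w2 w3 w4 w5 p q * m k (fun _ => ((p : ℝ), (q : ℝ))) := by
        simp only [mul_sum]
        symm
        rw [sum_comm]
        refine sum_congr rfl fun p _ => ?_
        rw [sum_comm]
        exact sum_congr rfl fun q _ => sum_congr rfl fun k _ => by ring
    _ = ∑ k ∈ range 6, (h ^ k / k !) *
          if k = 2 then 2 * (m k (fun _ => (1, 0)) + m k (fun _ => (0, 1))) else 0 :=
        sum_congr rfl fun k hk => by
          rw [stencil_sum_multilinear hw (Nat.lt_succ_iff.mp (mem_range.mp hk))]
    _ = _ := by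
        simp
        ring

end Stencil

theorem deriv_deriv_add_deriv_deriv_eq_iteratedFDeriv {u : ℝ → ℝ → ℝ}
    (hu : ContDiff ℝ 2 (fun p : ℝ × ℝ => u p.1 p.2)) (x y : ℝ) :
    deriv (deriv fun s => u s y) x + deriv (deriv fun s => u x s) y =
      iteratedFDeriv ℝ 2 (fun p : ℝ × ℝ => u p.1 p.2) (x, y) (fun _ => (1, 0)) +
        iteratedFDeriv ℝ 2 (fun p : ℝ × ℝ => u p.1 p.2) (x, y) (fun _ => (0, 1)) := by
  have hx := deriv_deriv_comp_add_smul hu ((0 : ℝ), y) ((1 : ℝ), (0 : ℝ)) x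
  have hy := deriv_deriv_comp_add_smul hu (x, (0 : ℝ)) ((0 : ℝ), (1 : ℝ)) y
  simp only [Prod.smul_mk, Prod.mk_add_mk, smul_eq_mul, mul_one, mul_zero, zero_add,
    add_zero] at hx hy
  rw [hx, hy]

theorem isBigO_one_div_sq_mul_sub {g : ℝ → ℝ} {c : ℝ} {n : ℕ}
    (hg : (fun h => g h - h ^ 2 * c) =O[𝓝 0] (fun h => h ^ (n + 2))) :
    (fun h => 1 / h ^ 2 * g h - c) =O[𝓝[≠] 0] (fun h => h ^ n) := by
  refine ((hg.mono nhdsWithin_le_nhds).mul (isBigO_refl (fun h : ℝ => 1 / h ^ 2) _)).congr' ?_ ?_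
  all_goals
    filter_upwards [self_mem_nhdsWithin] with h (hh : h ≠ 0)
    field_simp
  ring

theorem stmt_6 (w0 w1 w2 w3 w4 w5 : ℝ)
    (hcons : w0 + 4*w1 + 4*w2 + 4*w3 + 8*w4 + 4*w5 = 0)
    (hord2 : w1 + 2*w2 + 4*w3 + 10*w4 + 8*w5 = 1)
    (hord4a : w2 + 8*w4 + 16*w5 = 0)
    (hord4b : (1/12)*w1 + (1/6)*w2 + (4/3)*w3 + (17/6)*w4 + (8/3)*w5 = 0)
    (u : ℝ → ℝ → ℝ) (hu : ContDiff ℝ 6 (fun p : ℝ × ℝ => u p.1 p.2))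
    (x y : ℝ) :
    (fun h : ℝ =>
        (1 / h^2) * ∑ p ∈ Finset.Icc (-2 : ℤ) 2, ∑ q ∈ Finset.Icc (-2 : ℤ) 2,
            stencil w0 w1 w2 w3 w4 w5 p q * u (x + p * h) (y + q * h)
          - (deriv (deriv (fun s => u s y)) x + deriv (deriv (fun s => u x s)) y))
      =O[nhdsWithin 0 {0}ᶜ] (fun h : ℝ => h^4) := by
  have hF : ContDiff ℝ (6 : ℕ) (fun p : ℝ × ℝ => u p.1 p.2) := hu
  rw [deriv_deriv_add_deriv_deriv_eq_iteratedFDeriv (hu.of_le (by norm_num))]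
  refine isBigO_one_div_sq_mul_sub (n := 4) ?_
  have hterm (p q : ℤ) :=
    (hF.isBigO_sub_taylor_comp_add_smul (x, y) ((p : ℝ), (q : ℝ))).const_mul_left
      (stencil w0 w1 w2 w3 w4 w5 p q)
  refine (IsBigO.fun_sum (s := Icc (-2 : ℤ) 2) fun p _ =>
    IsBigO.fun_sum (s := Icc (-2 : ℤ) 2) fun q _ => hterm p q).congr_left fun h => ?_
  have hpoly := stencil_sum_taylor ⟨hcons, hord2, hord4a, hord4b⟩
    (fun k => (iteratedFDeriv ℝ k (fun p : ℝ × ℝ => u p.1 p.2) (x, y)).toMultilinearMap) h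
  simp only [ContinuousMultilinearMap.coe_coe] at hpoly
  rw [← hpoly]
  simp [mul_sub, sum_sub_distrib, mul_comm]
end
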